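/- arXiv:1112.3758 — 2 statements merged into one kernel-verified Lean document; each statement's English description precedes it below -/
import Mathlib

section
/- For every regular language L, the set of languages { L_{a,b} : a ≥ 1, b ≥ 0 } obtained by filtering L by all strong arithmetic progressions is finite. -/
/-- `filt a b w` is the word formed by the letters of `w` at positions
`b, a+b, 2a+b, …` that are less than `|w|`. -/
def filt {α : Type*} (a b : ℕ) (w : List α) : List α :=
  (List.range w.length).filterMap (fun i => w[a * i + b]?)

/-- `filtL a b L = { w_{a,b} : w ∈ L }`. -/
def filtL {α : Type*} (a b : ℕ) (L : Language α) : Language α :=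
  (filt a b) '' L

/-!
Cut a word as `w = u c₁ v₁ c₂ v₂ ⋯ cₙ vₙ` with `|u| = b`, `|vᵢ| = a - 1` for `i < n` and
`|vₙ| < a`; then `w_{a,b} = c₁ ⋯ cₙ`. So `x ∈ L_{a,b}` iff a DFA for `L` has an accepting path
that reads the letters of `x` and bridges the gaps by words of the prescribed lengths. Whether
such a path exists depends only on the relations "reachable by a word of length exactly `b` /
at most `b` / exactly `a - 1` / at most `a - 1`" on the finite set of states, and there are only
finitely many such quadruples of relations.
-/

section Filt

variable {α : Type*} {a b : ℕ}

theorem filt_eq_nil_iff {w : List α} : filt a b w = [] ↔ w.length ≤ b := by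
  refine ⟨fun h => ?_, fun h => List.filterMap_eq_nil_iff.2 fun i _ => ?_⟩
  · by_contra! hb
    simpa [hb] using List.filterMap_eq_nil_iff.1 h 0 (List.mem_range.2 (by omega))
  · exact List.getElem?_eq_none (h.trans (Nat.le_add_left b (a * i)))

theorem filt_eq_filterMap_range (ha : 1 ≤ a) {w : List α} {n : ℕ} (hn : w.length ≤ n) :
    filt a b w = (List.range n).filterMap fun i => w[a * i + b]? := by
  obtain ⟨k, rfl⟩ := Nat.exists_eq_add_of_le hn
  have hnone : ((List.range k).map (w.length + ·)).filterMap (fun i => w[a * i + b]?) = [] :=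
    List.filterMap_eq_nil_iff.2 fun i hi => List.getElem?_eq_none <| by
      obtain ⟨j, -, rfl⟩ := List.mem_map.1 hi
      have : w.length + j ≤ a * (w.length + j) := Nat.le_mul_of_pos_left _ ha
      omega
  rw [List.range_add, List.filterMap_append, hnone, List.append_nil, filt]

theorem filt_append_cons (ha : 1 ≤ a) {u v : List α} (hu : u.length = b) (c : α) :
    filt a b (u ++ c :: v) = c :: filt a (a - 1) v := by
  rw [filt_eq_filterMap_range (n := v.length + b) ha (Nat.le_add_right _ _), filt,
    List.length_append, List.length_cons, hu, show b + (v.length + 1) = v.length + b + 1 by omega,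
    List.range_succ_eq_map, List.filterMap_cons, List.filterMap_map]
  have hc : (u ++ c :: v)[a * 0 + b]? = some c := by simp [hu]
  simp only [hc]
  congr 2
  funext i
  have : a * (i + 1) + b = u.length + (a * i + (a - 1) + 1) := by
    rw [hu, Nat.mul_succ]; omega
  simp only [Function.comp_apply, Nat.succ_eq_add_one, this,
    List.getElem?_append_right (Nat.le_add_right _ _), Nat.add_sub_cancel_left,
    List.getElem?_cons_succ]

theorem filt_eq_cons_iff (ha : 1 ≤ a) {w x : List α} {c : α} :
    filt a b w = c :: x ↔ ∃ u v, w = u ++ c :: v ∧ u.length = b ∧ filt a (a - 1) v = x := by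
  refine ⟨fun h => ?_, ?_⟩
  · have hb : b < w.length := by
      by_contra! hw
      simp [filt_eq_nil_iff.2 hw] at h
    obtain ⟨c', v, hv⟩ :=
      List.exists_cons_of_ne_nil (l := w.drop b) (List.drop_eq_nil_iff.not.2 (by omega))
    have hw : w = w.take b ++ c' :: v := by rw [← hv, List.take_append_drop]
    have htake : (w.take b).length = b := List.length_take_of_le hb.le
    rw [hw, filt_append_cons ha htake, List.cons.injEq] at h
    obtain ⟨rfl, rfl⟩ := h
    exact ⟨_, _, hw, htake, rfl⟩
  · rintro ⟨u, v, rfl, hu, rfl⟩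
    exact filt_append_cons ha hu c

end Filt

namespace DFA

variable {α σ : Type*} (M : DFA α σ)

def ReachesIn (k : ℕ) (p q : σ) : Prop :=
  ∃ u : List α, u.length = k ∧ M.evalFrom p u = q

def ReachesWithin (k : ℕ) (p q : σ) : Prop :=
  ∃ u : List α, u.length ≤ k ∧ M.evalFrom p u = q

/-- Runs through the letters of `x` where the gap before the first letter is described by `G`
(by `E` if `x = []`) and every later gap by `A` (by `T` for the trailing one). -/
def GapRun (G E A T : σ → σ → Prop) : List α → σ → σ → Prop
  | [], p, t => E p t
  | c :: x, p, t => ∃ q, G p q ∧ GapRun A T A T x (M.step q c) t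

theorem gapRun_iff {a : ℕ} (ha : 1 ≤ a) (b : ℕ) (x : List α) (p t : σ) :
    M.GapRun (M.ReachesIn b) (M.ReachesWithin b) (M.ReachesIn (a - 1)) (M.ReachesWithin (a - 1))
      x p t ↔ ∃ w, M.evalFrom p w = t ∧ filt a b w = x := by
  induction x generalizing b p with
  | nil =>
    simp only [GapRun, ReachesWithin, filt_eq_nil_iff]
    exact exists_congr fun _ => and_comm
  | cons c x ih =>
    simp only [GapRun, ih, filt_eq_cons_iff ha, ReachesIn]
    constructor
    · rintro ⟨_, ⟨u, hu, rfl⟩, v, rfl, hv⟩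
      exact ⟨u ++ c :: v, by rw [evalFrom_of_append, evalFrom_cons], u, v, rfl, hu, hv⟩
    · rintro ⟨_, rfl, u, v, rfl, hu, hv⟩
      exact ⟨_, ⟨u, hu, rfl⟩, v, by rw [evalFrom_of_append, evalFrom_cons], hv⟩

theorem filtL_accepts {a : ℕ} (ha : 1 ≤ a) (b : ℕ) :
    filtL a b M.accepts = {x | ∃ t ∈ M.accept, M.GapRun (M.ReachesIn b) (M.ReachesWithin b)
      (M.ReachesIn (a - 1)) (M.ReachesWithin (a - 1)) x M.start t} := by
  ext x
  simp only [filtL, M.gapRun_iff ha]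
  constructor
  · rintro ⟨w, hw, rfl⟩
    exact ⟨_, hw, w, rfl, rfl⟩
  · rintro ⟨_, ht, w, rfl, rfl⟩
    exact ⟨w, ht, rfl⟩

end DFA

theorem filtL_strong_finite {α : Type*} (L : Language α) (hL : L.IsRegular) :
    {M : Language α | ∃ a b : ℕ, 1 ≤ a ∧ M = filtL a b L}.Finite := by
  obtain ⟨σ, _, M, rfl⟩ := hL
  let lang (R : Fin 4 → σ → σ → Prop) : Language α :=
    {x | ∃ t ∈ M.accept, M.GapRun (R 0) (R 1) (R 2) (R 3) x M.start t}
  refine (Set.finite_range lang).subset ?_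
  rintro _ ⟨a, b, ha, rfl⟩
  exact ⟨![M.ReachesIn b, M.ReachesWithin b, M.ReachesIn (a - 1), M.ReachesWithin (a - 1)],
    (M.filtL_accepts ha b).symm⟩
end

section
/- There exists a context-free language L such that the family of filtered languages { L_{a,0} : a ≥ 1 } (filtering by all weak arithmetic progressions) is infinite. -/
/-- The word `1 0ⁿ 2 0^{k₁} 3 ⋯ 0^{kₘ} 3` over the alphabet `{0,1,2,3}`. -/
def Lword (n : ℕ) (ks : List ℕ) : List (Fin 4) :=
  1 :: (List.replicate n 0 ++ 2 :: (ks.map (fun k => List.replicate k (0 : Fin 4) ++ [3])).flatten)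

/-- The language `{ 1 0ⁿ 2 (0⁺3)ⁿ : n ≥ 1 }`. -/
def L : Language (Fin 4) :=
  { w | ∃ n : ℕ, 1 ≤ n ∧ ∃ ks : List ℕ,
      ks.length = n ∧ (∀ k ∈ ks, 1 ≤ k) ∧ w = Lword n ks }

/-! In a word of `L` the letter `2` sits at position `#₃ + 1`, where `#₃` is the number of
letters `3`. Filtering `1 0^{2d+1} 2 (0^d 3)^{2d+1} ∈ L` with step `d + 1` gives `1 0 2 3^{2d+1}`.
If this word were also `w_{c+1,0}` with `w ∈ L` and `c < d`, the `2` of `w` would sit at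
position `2(c + 1)`, so `w` would have only `2c + 1` letters `3`, fewer than the `2d + 1` that
survive the filtering. Hence the languages `L_{a,0}`, `a ≥ 1`, are pairwise distinct.

`L` is the language of the grammar `S → 1X, X → 0XB | 02B, B → 0B | 03`; the inclusion of the
language in `L` goes by induction on the word, splitting derivations of concatenations. -/

lemma List.eq_length_of_getElem?_append_cons {α : Type*} {u v : List α} {x : α} {i : ℕ}
    (hu : x ∉ u) (hv : x ∉ v) (h : (u ++ x :: v)[i]? = some x) : i = u.length := by
  rcases lt_trichotomy i u.length with hlt | rfl | hgt
  · rw [List.getElem?_append_left hlt] at h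
    exact absurd (List.mem_of_getElem? h) hu
  · rfl
  · obtain ⟨k, rfl⟩ := Nat.exists_eq_add_of_lt hgt
    rw [List.getElem?_append_right (by omega), show u.length + k + 1 - u.length = k + 1 by omega,
      List.getElem?_cons_succ] at h
    exact absurd (List.mem_of_getElem? h) hv

section Filt

variable {α : Type*}

@[simp] lemma filt_nil (a b : ℕ) : filt a b ([] : List α) = [] := rfl

lemma filt_zero_eq_filterMap_range {a n : ℕ} (ha : 0 < a) {w : List α} (hn : w.length ≤ n) :
    filt a 0 w = (List.range n).filterMap (fun i => w[a * i]?) := by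
  obtain ⟨d, rfl⟩ := Nat.exists_eq_add_of_le hn
  -- beyond `|w|` every index `a * i ≥ i` is out of range
  have : (List.range d).filterMap ((fun i => w[a * i]?) ∘ (w.length + ·)) = [] :=
    List.filterMap_eq_nil_iff.mpr fun i _ =>
      List.getElem?_eq_none ((Nat.le_add_right _ i).trans (Nat.le_mul_of_pos_left _ ha))
  rw [List.range_add, List.filterMap_append, List.filterMap_map, this, List.append_nil, filt]
  simp only [Nat.add_zero]

lemma filt_cons (c : ℕ) (x : α) (s : List α) :
    filt (c + 1) 0 (x :: s) = x :: filt (c + 1) 0 (s.drop c) := by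
  rw [filt, List.length_cons, List.range_succ_eq_map, List.filterMap_cons_some (b := x) (by simp),
    List.filterMap_map, filt_zero_eq_filterMap_range c.succ_pos (n := s.length) (by simp)]
  congr 1
  refine List.filterMap_congr fun i _ => ?_
  simp only [Function.comp, List.getElem?_drop]
  rw [show (c + 1) * (i + 1) + 0 = c + (c + 1) * i + 1 by ring, List.getElem?_cons_succ]

lemma filt_cons_append (c : ℕ) (x : α) {u : List α} (hu : u.length = c) (t : List α) :
    filt (c + 1) 0 (x :: (u ++ t)) = x :: filt (c + 1) 0 t := by
  rw [filt_cons, List.drop_left' hu]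

lemma filt_cons_flatten_replicate (c k : ℕ) (x y z : α) :
    filt (c + 1) 0 (y :: (List.replicate k (List.replicate c z ++ [x])).flatten)
      = y :: List.replicate k x := by
  induction k generalizing y with
  | zero => simp [filt_cons]
  | succ k ih =>
    rw [List.replicate_succ, List.flatten_cons, List.append_assoc,
      filt_cons_append c y (List.length_replicate ..), List.singleton_append, ih,
      List.replicate_succ]

lemma getElem?_filt (c : ℕ) (w : List α) (j : ℕ) :
    (filt (c + 1) 0 w)[j]? = w[(c + 1) * j]? := by
  induction j generalizing w with
  | zero => cases w <;> simp [filt_cons]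
  | succ j ih =>
    cases w with
    | nil => simp
    | cons x s =>
      rw [filt_cons, List.getElem?_cons_succ, ih, List.getElem?_drop,
        show (c + 1) * (j + 1) = c + (c + 1) * j + 1 by ring, List.getElem?_cons_succ]

lemma filt_sublist (c : ℕ) (w : List α) : (filt (c + 1) 0 w).Sublist w := by
  induction hn : w.length using Nat.strong_induction_on generalizing w with
  | _ n ih =>
  cases w with
  | nil => simp
  | cons x s =>
    rw [filt_cons]
    exact ((ih _ (by simp [← hn]) (s.drop c) rfl).trans (List.drop_sublist c s)).cons_cons x

end Filt

namespace ContextFreeRule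

variable {T N : Type*} {r : ContextFreeRule T N}

lemma Rewrites.append_cases {u v w : List (Symbol T N)} (h : r.Rewrites (u ++ v) w) :
    (∃ u', r.Rewrites u u' ∧ w = u' ++ v) ∨ (∃ v', r.Rewrites v v' ∧ w = u ++ v') := by
  induction u generalizing w with
  | nil => exact .inr ⟨w, h, rfl⟩
  | cons x u ih =>
    cases h with
    | head => exact .inl ⟨r.output ++ u, .head u, by simp⟩
    | cons _ h =>
      rcases ih h with ⟨u', hu, rfl⟩ | ⟨v', hv, rfl⟩
      · exact .inl ⟨x :: u', hu.cons x, rfl⟩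
      · exact .inr ⟨v', hv, rfl⟩

end ContextFreeRule

namespace ContextFreeGrammar

variable {T : Type*} {g : ContextFreeGrammar T}

lemma Derives.append_split {u v w : List (Symbol T g.NT)} (h : g.Derives (u ++ v) w) :
    ∃ u' v', w = u' ++ v' ∧ g.Derives u u' ∧ g.Derives v v' := by
  induction h with
  | refl => exact ⟨u, v, rfl, .refl u, .refl v⟩
  | tail _ hstep ih =>
    obtain ⟨u', v', rfl, hu, hv⟩ := ih
    obtain ⟨r, hr, hrw⟩ := hstep
    rcases hrw.append_cases with ⟨u'', hu', rfl⟩ | ⟨v'', hv', rfl⟩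
    · exact ⟨u'', v', rfl, hu.trans_produces ⟨r, hr, hu'⟩, hv⟩
    · exact ⟨u', v'', rfl, hu, hv.trans_produces ⟨r, hr, hv'⟩⟩

lemma Derives.append_split_terminal {u v : List (Symbol T g.NT)} {w : List T}
    (h : g.Derives (u ++ v) (w.map .terminal)) :
    ∃ w₁ w₂, w = w₁ ++ w₂ ∧
      g.Derives u (w₁.map .terminal) ∧ g.Derives v (w₂.map .terminal) := by
  obtain ⟨u', v', huv, hu, hv⟩ := h.append_split
  obtain ⟨w₁, w₂, rfl, rfl, rfl⟩ := List.map_eq_append_iff.mp huv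
  exact ⟨w₁, w₂, rfl, hu, hv⟩

lemma Derives.eq_of_map_terminal {u : List T} {w : List (Symbol T g.NT)}
    (h : g.Derives (u.map .terminal) w) : w = u.map .terminal := by
  rcases h.eq_or_head with rfl | ⟨v, hv, -⟩
  · rfl
  · obtain ⟨r, -, hr⟩ := hv.exists_nonterminal_input_mem
    simp at hr

lemma Derives.exists_of_terminal_cons {t : T} {u : List (Symbol T g.NT)} {w : List T}
    (h : g.Derives (.terminal t :: u) (w.map .terminal)) :
    ∃ w', w = t :: w' ∧ g.Derives u (w'.map .terminal) := by
  obtain ⟨w₁, w', rfl, ht, hu⟩ := Derives.append_split_terminal (u := [.terminal t]) h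
  have : w₁.map (Symbol.terminal (N := g.NT)) = [t].map .terminal :=
    Derives.eq_of_map_terminal (u := [t]) ht
  rw [List.map_inj_right (fun _ _ => Symbol.terminal.inj)] at this
  exact ⟨w', by simp [this], hu⟩

lemma Derives.exists_rule_of_nonterminal {n : g.NT} {w : List T}
    (h : g.Derives [.nonterminal n] (w.map .terminal)) :
    ∃ r ∈ g.rules, r.input = n ∧ g.Derives r.output (w.map .terminal) := by
  rcases h.eq_or_head with h | ⟨v, ⟨r, hr, hrw⟩, hv⟩
  · cases w <;> simp at h
  · obtain ⟨p, q, hpq, rfl⟩ := hrw.exists_parts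
    obtain ⟨rfl, rfl⟩ : p = [] ∧ q = [] := by
      cases p <;> cases q <;> simp_all
    simp only [List.nil_append, List.singleton_append, List.cons.injEq,
      Symbol.nonterminal.injEq] at hpq
    exact ⟨r, hr, hpq.1.symm, by simpa using hv⟩

lemma produces_of_mem_rules {r : ContextFreeRule T g.NT} (hr : r ∈ g.rules) :
    g.Produces [.nonterminal r.input] r.output :=
  ⟨r, hr, .input_output⟩

end ContextFreeGrammar

namespace LGrammar

open ContextFreeGrammar

inductive NT
  | S | X | B
  deriving DecidableEq

abbrev Rule := ContextFreeRule (Fin 4) NT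

def ruleS : Rule := ⟨.S, [.terminal 1, .nonterminal .X]⟩
def ruleXStep : Rule := ⟨.X, [.terminal 0, .nonterminal .X, .nonterminal .B]⟩
def ruleXBase : Rule := ⟨.X, [.terminal 0, .terminal 2, .nonterminal .B]⟩
def ruleBStep : Rule := ⟨.B, [.terminal 0, .nonterminal .B]⟩
def ruleBBase : Rule := ⟨.B, [.terminal 0, .terminal 3]⟩

abbrev grammar : ContextFreeGrammar (Fin 4) where
  NT := NT
  initial := .S
  rules := {ruleS, ruleXStep, ruleXBase, ruleBStep, ruleBBase}

lemma mem_rules {r : Rule} : r ∈ grammar.rules ↔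
    r = ruleS ∨ r = ruleXStep ∨ r = ruleXBase ∨ r = ruleBStep ∨ r = ruleBBase := by
  simp only [grammar, Finset.mem_insert, Finset.mem_singleton]

def xWord (n : ℕ) (ks : List ℕ) : List (Fin 4) :=
  List.replicate n 0 ++ 2 :: (ks.map (fun k => List.replicate k (0 : Fin 4) ++ [3])).flatten

lemma Lword_eq_cons_xWord (n : ℕ) (ks : List ℕ) : Lword n ks = 1 :: xWord n ks := rfl

lemma xWord_succ_concat (n k : ℕ) (ks : List ℕ) :
    xWord (n + 1) (ks ++ [k]) = 0 :: xWord n ks ++ (List.replicate k 0 ++ [3]) := by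
  simp [xWord, List.replicate_succ]

lemma derives_B_iff {w : List (Fin 4)} :
    grammar.Derives [.nonterminal NT.B] (w.map .terminal) ↔
      ∃ k, 1 ≤ k ∧ w = List.replicate k 0 ++ [3] := by
  constructor
  · induction hn : w.length using Nat.strong_induction_on generalizing w with
    | _ n ih =>
    intro h
    obtain ⟨r, hr, hin, hder⟩ := h.exists_rule_of_nonterminal
    rcases mem_rules.mp hr with rfl | rfl | rfl | rfl | rfl <;> cases hin
    · obtain ⟨w', rfl, hw'⟩ := hder.exists_of_terminal_cons
      obtain ⟨k, hk, rfl⟩ := ih w'.length (by simp [← hn]) rfl hw'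
      exact ⟨k + 1, by omega, by simp [List.replicate_succ]⟩
    · obtain ⟨w', rfl, hw'⟩ := hder.exists_of_terminal_cons
      obtain ⟨w'', rfl, hw''⟩ := hw'.exists_of_terminal_cons
      have : w'' = [] := by simpa using (Derives.eq_of_map_terminal (u := []) hw'')
      exact ⟨1, le_rfl, by simp [this]⟩
  · rintro ⟨k, hk, rfl⟩
    induction k, hk using Nat.le_induction with
    | base => exact (produces_of_mem_rules (show ruleBBase ∈ grammar.rules by decide)).single
    | succ k _ ih =>
      refine (produces_of_mem_rules (show ruleBStep ∈ grammar.rules by decide)).trans_derives ?_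
      simpa [ruleBStep, List.replicate_succ] using ih.append_left [.terminal 0]

lemma derives_X_iff {w : List (Fin 4)} :
    grammar.Derives [.nonterminal NT.X] (w.map .terminal) ↔
      ∃ n, 1 ≤ n ∧ ∃ ks : List ℕ,
        ks.length = n ∧ (∀ k ∈ ks, 1 ≤ k) ∧ w = xWord n ks := by
  constructor
  · induction hn : w.length using Nat.strong_induction_on generalizing w with
    | _ n ih =>
    intro h
    obtain ⟨r, hr, hin, hder⟩ := h.exists_rule_of_nonterminal
    rcases mem_rules.mp hr with rfl | rfl | rfl | rfl | rfl <;> cases hin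
    · obtain ⟨w', rfl, hw'⟩ := hder.exists_of_terminal_cons
      obtain ⟨w₁, w₂, rfl, hw₁, hw₂⟩ :=
        Derives.append_split_terminal (g := grammar) (u := [.nonterminal NT.X]) hw'
      obtain ⟨m, hm, ks, rfl, hks, rfl⟩ := ih w₁.length (by simp [← hn]) rfl hw₁
      obtain ⟨k, hk, rfl⟩ := derives_B_iff.mp hw₂
      refine ⟨ks.length + 1, by omega, ks ++ [k], by simp, ?_, (xWord_succ_concat ..).symm⟩
      simpa [or_imp, forall_and] using ⟨hks, hk⟩
    · obtain ⟨w', rfl, hw'⟩ := hder.exists_of_terminal_cons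
      obtain ⟨w'', rfl, hw''⟩ := hw'.exists_of_terminal_cons
      obtain ⟨k, hk, rfl⟩ := derives_B_iff.mp hw''
      exact ⟨1, le_rfl, [k], rfl, by simpa using hk, by simp [xWord]⟩
  · rintro ⟨n, hn, ks, rfl, hks, rfl⟩
    induction ks using List.reverseRecOn with
    | nil => simp at hn
    | append_singleton ks k ih =>
      have hk : 1 ≤ k := hks k (by simp)
      obtain rfl | hne := eq_or_ne ks []
      · refine (produces_of_mem_rules
          (show ruleXBase ∈ grammar.rules by decide)).trans_derives ?_
        simpa [ruleXBase, xWord] using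
          (derives_B_iff.mpr ⟨k, hk, rfl⟩).append_left [.terminal 0, .terminal 2]
      · have hX := ih (List.length_pos_iff.mpr hne) (fun k hk => hks k (by simp [hk]))
        refine (produces_of_mem_rules (show ruleXStep ∈ grammar.rules by decide)).trans_derives ?_
        have := ((hX.append_left [.terminal 0]).append_right [.nonterminal .B]).trans
          ((derives_B_iff.mpr ⟨k, hk, rfl⟩).append_left _)
        simpa [ruleXStep, xWord_succ_concat] using this

lemma language_eq : grammar.language = L := by
  ext w
  rw [ContextFreeGrammar.mem_language_iff]
  constructor
  · intro h
    obtain ⟨r, hr, hin, hder⟩ := h.exists_rule_of_nonterminal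
    rcases mem_rules.mp hr with rfl | rfl | rfl | rfl | rfl <;> cases hin
    obtain ⟨w', rfl, hw'⟩ := hder.exists_of_terminal_cons
    obtain ⟨n, hn, ks, hks, hk, rfl⟩ := derives_X_iff.mp hw'
    exact ⟨n, hn, ks, hks, hk, rfl⟩
  · rintro ⟨n, hn, ks, hks, hk, rfl⟩
    refine (produces_of_mem_rules (show ruleS ∈ grammar.rules by decide)).trans_derives ?_
    simpa [ruleS, Lword_eq_cons_xWord] using
      (derives_X_iff.mpr ⟨n, hn, ks, hks, hk, rfl⟩).append_left [.terminal 1]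

end LGrammar

theorem isContextFree_L : L.IsContextFree :=
  ⟨LGrammar.grammar, LGrammar.language_eq⟩

lemma eq_count_three_add_one_of_mem_L {w : List (Fin 4)} (hw : w ∈ L) {i : ℕ}
    (hi : w[i]? = some 2) : i = w.count 3 + 1 := by
  obtain ⟨n, -, ks, rfl, -, rfl⟩ := hw
  have := List.eq_length_of_getElem?_append_cons (u := 1 :: List.replicate ks.length 0)
    (by simp) (by simp) hi
  have hblock (k : ℕ) : (List.replicate k (0 : Fin 4) ++ [3]).count 3 = 1 := by
    simp [List.count_replicate]
  simp [this, Lword, List.count_flatten, List.count_replicate, Function.comp_def, hblock]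

lemma Lword_replicate_mem_L {d : ℕ} (hd : 1 ≤ d) :
    Lword (2 * d + 1) (List.replicate (2 * d + 1) d) ∈ L :=
  ⟨2 * d + 1, by omega, _, List.length_replicate,
    fun k hk => List.eq_of_mem_replicate hk ▸ hd, rfl⟩

lemma filt_Lword_replicate (d : ℕ) :
    filt (d + 1) 0 (Lword (2 * d + 1) (List.replicate (2 * d + 1) d))
      = 1 :: 0 :: 2 :: List.replicate (2 * d + 1) 3 := by
  rw [Lword, List.map_replicate,
    show 2 * d + 1 = d + (d + 1) by ring, List.replicate_add, List.replicate_succ,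
    List.append_assoc, List.cons_append,
    filt_cons_append d 1 List.length_replicate, filt_cons_append d 0 List.length_replicate,
    filt_cons_flatten_replicate]

lemma filtL_succ_ne_of_lt {c d : ℕ} (hcd : c < d) : filtL (c + 1) 0 L ≠ filtL (d + 1) 0 L := by
  intro h
  have hv : 1 :: 0 :: 2 :: List.replicate (2 * d + 1) 3 ∈ filtL (d + 1) 0 L :=
    ⟨_, Lword_replicate_mem_L (by omega), filt_Lword_replicate d⟩
  obtain ⟨w, hw, hwv⟩ := h ▸ hv
  have h2 : w[(c + 1) * 2]? = some 2 := by rw [← getElem?_filt, hwv]; rfl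
  have hcount : 2 * d + 1 ≤ w.count 3 := by
    simpa [hwv, List.count_replicate] using (filt_sublist c w).count_le 3
  have := eq_count_three_add_one_of_mem_L hw h2
  omega

theorem exists_cfl_weak_filtration_infinite :
    ∃ (L : Language (Fin 4)), L.IsContextFree ∧
      {M : Language (Fin 4) | ∃ a : ℕ, 1 ≤ a ∧ M = filtL a 0 L}.Infinite := by
  refine ⟨L, isContextFree_L,
    Set.infinite_of_injective_forall_mem (f := fun c => filtL (c + 1) 0 L) ?_
      fun c => ⟨c + 1, by omega, rfl⟩⟩
  exact .of_lt_imp_ne fun c d hcd => filtL_succ_ne_of_lt hcd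
end
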